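/- Every (m,n)_k-ring graph is weakly connected: from every vertex there is a directed path to the vertex all of whose columns equal the column (0,...,0,1)^T. -/

import Mathlib

open Finset

/-- Vertical cyclic rotation of a pattern (of height `m`) by `r` rows. -/
def vrot {m j k : ℕ} (r : Fin m) (P : Fin m → Fin j → Fin k) : Fin m → Fin j → Fin k :=
  fun i => P (i + r)

/-- A pattern viewed as a word of rows, in the lexicographic order. -/
def patLex {m j k : ℕ} (P : Fin m → Fin j → Fin k) : Lex (Fin m → Lex (Fin j → Fin k)) :=
  toLex (fun i => toLex (P i))

/-- A pattern is row-Lyndon if it is lexicographically strictly smaller than every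
nontrivial vertical rotation of itself. -/
def IsRowLyndon {m j k : ℕ} (P : Fin m → Fin j → Fin k) : Prop :=
  ∀ r : Fin m, (r : ℕ) ≠ 0 → patLex P < patLex (vrot r P)

/-- A pattern is the `lexmin` representative of its vertical rotation class. -/
def IsLexmin {m j k : ℕ} (P : Fin m → Fin j → Fin k) : Prop :=
  ∀ r : Fin m, patLex P ≤ patLex (vrot r P)

/-- Append the column `R` on the right of the pattern `P`. -/
def snocPat {m j k : ℕ} (P : Fin m → Fin j → Fin k) (R : Fin m → Fin k) :
    Fin m → Fin (j + 1) → Fin k :=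
  fun i => Fin.snoc (P i) (R i)

/-- Drop the leftmost column of the pattern `Q`. -/
def tailPat {m j k : ℕ} (Q : Fin m → Fin (j + 1) → Fin k) : Fin m → Fin j → Fin k :=
  fun i t => Q i t.succ

/-- The edge relation of the `(m, j+1)_k`-ring graph: there is an edge labeled `R` from the
vertex `P₁` to the vertex `P₂` iff `P₁` and `P₂` are lexmin representatives, the pattern
`[P₁, R]` of shape `(m, j+1)` is row-aperiodic (its lexmin rotation is row-Lyndon), `P₂` is
the lexmin of the last `j` columns of `[P₁, R]`, and `R` is the lexicographically smallest
column producing this rotation class from `P₁`. -/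
def RingEdge {m j k : ℕ} (P₁ P₂ : Fin m → Fin j → Fin k) (R : Fin m → Fin k) : Prop :=
  IsLexmin P₁ ∧ IsLexmin P₂ ∧
  (∃ r : Fin m, IsRowLyndon (vrot r (snocPat P₁ R))) ∧
  (∃ r : Fin m, vrot r (tailPat (snocPat P₁ R)) = P₂) ∧
  (∀ R' : Fin m → Fin k,
    (∃ r : Fin m, vrot r (snocPat P₁ R') = snocPat P₁ R) → toLex R ≤ toLex R')

/-! Appending a column with a single nonzero entry yields a row-aperiodic pattern, whose lexmin
rotation is therefore row-Lyndon. Such a column is the minimal label of its edge when no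
nontrivial rotation fixes the vertex, and also, for an arbitrary vertex, when it is
`(0,…,0,1)ᵀ`, the least of its rotations. So append `(0,…,0,1)ᵀ` first and afterwards always the
rotation of it into which the previous re-normalisation turned the appended column: after `j`
steps all columns are one and the same rotation of `(0,…,0,1)ᵀ`, and the lexmin representative
of that pattern is the target. -/

section Rotation

variable {m j k : ℕ}

theorem vrot_vrot (r s : Fin m) (P : Fin m → Fin j → Fin k) :
    vrot s (vrot r P) = vrot (s + r) P := by
  funext i
  simp only [vrot, add_assoc]

theorem vrot_zero [NeZero m] (P : Fin m → Fin j → Fin k) : vrot 0 P = P := by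
  funext i
  simp only [vrot, add_zero]

theorem vrot_neg_vrot [NeZero m] (r : Fin m) (P : Fin m → Fin j → Fin k) :
    vrot (-r) (vrot r P) = P := by
  rw [vrot_vrot, neg_add_cancel, vrot_zero]

theorem patLex_injective :
    Function.Injective (patLex : (Fin m → Fin j → Fin k) → Lex (Fin m → Lex (Fin j → Fin k))) :=
  fun _ _ h => h

def IsAperiodic [NeZero m] (P : Fin m → Fin j → Fin k) : Prop :=
  ∀ r : Fin m, vrot r P = P → r = 0

theorem IsAperiodic.vrot [NeZero m] {P : Fin m → Fin j → Fin k} (hP : IsAperiodic P)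
    (r : Fin m) : IsAperiodic (vrot r P) := by
  intro s hs
  apply hP s
  have h := congrArg (_root_.vrot (-r)) hs
  rwa [vrot_neg_vrot, vrot_vrot, vrot_vrot, show -r + s + r = s by abel] at h

theorem exists_isLexmin_vrot [NeZero m] (P : Fin m → Fin j → Fin k) :
    ∃ r, IsLexmin (vrot r P) := by
  obtain ⟨r, hr⟩ := Finite.exists_min (fun s : Fin m => patLex (vrot s P))
  exact ⟨r, fun s => by rw [vrot_vrot]; exact hr _⟩

theorem IsLexmin.isRowLyndon [NeZero m] {P : Fin m → Fin j → Fin k} (h : IsLexmin P)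
    (hP : IsAperiodic P) : IsRowLyndon P := by
  intro r hr
  refine (h r).lt_of_ne fun he => hr ?_
  rw [hP r (patLex_injective he).symm, Fin.val_zero]

theorem IsLexmin.vrot_eq [NeZero m] {P : Fin m → Fin j → Fin k} {c : Fin m} (hP : IsLexmin P)
    (hc : IsLexmin (vrot c P)) : vrot c P = P := by
  refine patLex_injective (le_antisymm ?_ (hP c))
  simpa only [vrot_neg_vrot] using hc (-c)

end Rotation

section Spike

variable {m : ℕ} {α : Type*}

def spike (lo hi : α) (a : Fin m) : Fin m → α := fun i => if i = a then hi else lo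

theorem spike_add [NeZero m] (lo hi : α) (a c i : Fin m) :
    spike lo hi a (i + c) = spike lo hi (a - c) i := by
  simp only [spike, eq_sub_iff_add_eq]

theorem spike_injective {lo hi : α} (h : lo ≠ hi) :
    Function.Injective (spike lo hi : Fin m → Fin m → α) := by
  intro a b hab
  have := congrFun hab a
  simp only [spike, if_true] at this
  by_contra hne
  rw [if_neg hne] at this
  exact h this.symm

theorem toLex_spike_le [LinearOrder α] {lo hi : α} (h : lo ≤ hi) {a b : Fin m} (hba : b ≤ a) :
    toLex (spike lo hi a) ≤ toLex (spike lo hi b) := by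
  rcases hba.lt_or_eq with hba | rfl
  · rcases h.lt_or_eq with h | rfl
    · refine le_of_lt ⟨b, fun i hi => ?_, ?_⟩
      · simp [spike, hi.ne, (hi.trans hba).ne]
      · show spike lo hi a b < spike lo hi b b
        simpa [spike, hba.ne] using h
    · have hconst : ∀ c : Fin m, spike lo lo c = fun _ => lo :=
        fun c => funext fun _ => ite_self lo
      rw [hconst, hconst]
  · rfl

end Spike

section Pattern

variable {m j k : ℕ}

theorem vrot_spike [NeZero m] (A B : Fin j → Fin k) (a r : Fin m) :
    vrot r (spike A B a) = spike A B (a - r) :=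
  funext fun i => spike_add A B a r i

theorem patLex_spike (A B : Fin j → Fin k) (a : Fin m) :
    patLex (spike A B a) = toLex (spike (toLex A) (toLex B) a) := by
  funext i
  exact apply_ite toLex _ _ _

theorem isLexmin_spike_last {n : ℕ} {A B : Fin j → Fin k} (hAB : toLex A ≤ toLex B) :
    IsLexmin (spike A B (Fin.last n)) := by
  intro r
  rw [vrot_spike, patLex_spike, patLex_spike]
  exact toLex_spike_le hAB (Fin.le_last _)

theorem isAperiodic_of_col_eq_spike [NeZero m] {P : Fin m → Fin j → Fin k} {lo hi : Fin k}
    (hlohi : lo ≠ hi) {a : Fin m} (t : Fin j) (ht : ∀ i, P i t = spike lo hi a i) :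
    IsAperiodic P := by
  intro r hr
  have hshift : spike lo hi (a - r) = spike lo hi a := funext fun i => by
    rw [← spike_add, ← ht, ← ht]
    exact congrFun (congrFun hr i) t
  exact sub_eq_self.mp (spike_injective hlohi hshift)

theorem vrot_snocPat (r : Fin m) (P : Fin m → Fin j → Fin k) (R : Fin m → Fin k) :
    vrot r (snocPat P R) = snocPat (vrot r P) (fun i => R (i + r)) :=
  rfl

theorem snocPat_inj {P P' : Fin m → Fin j → Fin k} {R R' : Fin m → Fin k} :
    snocPat P R = snocPat P' R' ↔ P = P' ∧ R = R' := by
  refine ⟨fun h => ?_, fun ⟨hP, hR⟩ => hP ▸ hR ▸ rfl⟩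
  have hrow := fun i => Fin.snoc_inj.mp (congrFun h i)
  exact ⟨funext fun i => (hrow i).1, funext fun i => (hrow i).2⟩

theorem tailPat_snocPat_col {P : Fin m → Fin j → Fin k} {R : Fin m → Fin k} {c : ℕ}
    (hP : ∀ t : Fin j, c + 1 ≤ t → ∀ i, P i t = R i) :
    ∀ t : Fin j, c ≤ t → ∀ i, tailPat (snocPat P R) i t = R i := by
  intro t ht i
  simp only [tailPat, snocPat]
  rcases Fin.eq_castSucc_or_eq_last t.succ with ⟨s, hs⟩ | hs
  · rw [hs, Fin.snoc_castSucc]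
    have hval : (t : ℕ) + 1 = s := by simpa using congrArg Fin.val hs
    exact hP s (by omega) i
  · rw [hs, Fin.snoc_last]

end Pattern

section RingGraph

variable {m j k : ℕ}

def RingAdj (P₁ P₂ : Fin m → Fin j → Fin k) : Prop := ∃ R, RingEdge P₁ P₂ R

theorem exists_ringEdge_snocPat [NeZero m] {P : Fin m → Fin j → Fin k} {R : Fin m → Fin k}
    (hP : IsLexmin P) (hPR : IsAperiodic (snocPat P R))
    (hmin : ∀ (r : Fin m) (R' : Fin m → Fin k), vrot r P = P → (∀ i, R' (i + r) = R i) →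
      toLex R ≤ toLex R') :
    ∃ r, RingEdge P (vrot r (tailPat (snocPat P R))) R := by
  obtain ⟨r, hr⟩ := exists_isLexmin_vrot (tailPat (snocPat P R))
  obtain ⟨s, hs⟩ := exists_isLexmin_vrot (snocPat P R)
  refine ⟨r, hP, hr, ⟨s, hs.isRowLyndon (hPR.vrot s)⟩, ⟨r, rfl⟩, ?_⟩
  rintro R' ⟨r', hr'⟩
  rw [vrot_snocPat, snocPat_inj] at hr'
  exact hmin r' R' hr'.1 (congrFun hr'.2)

theorem reflTransGen_ringAdj_spike_last {n : ℕ} {lo hi : Fin k} (hlohi : lo < hi) (c : ℕ)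
    (hc : c ≤ j) (Q : Fin (n + 1) → Fin j → Fin k) (a : Fin (n + 1)) (hQ : IsLexmin Q)
    (hQa : IsAperiodic Q ∨ a = Fin.last n)
    (hcol : ∀ t : Fin j, c ≤ t → ∀ i, Q i t = spike lo hi a i) :
    Relation.ReflTransGen RingAdj Q (spike (fun _ => lo) (fun _ => hi) (Fin.last n)) := by
  induction c generalizing Q a with
  | zero =>
    have hQ_eq : Q = vrot (Fin.last n - a) (spike (fun _ => lo) (fun _ => hi) (Fin.last n)) := by
      rw [vrot_spike, sub_sub_cancel]
      funext i t
      rw [hcol t (Nat.zero_le _) i]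
      exact (apply_ite (fun f : Fin j → Fin k => f t) (i = a) (fun _ => hi) fun _ => lo).symm
    have hT := isLexmin_spike_last (n := n) (Pi.toLex_monotone fun (_ : Fin j) => hlohi.le)
    rw [hQ_eq, IsLexmin.vrot_eq hT (hQ_eq ▸ hQ)]
  | succ c ih =>
    set R := spike lo hi a
    have hQR : IsAperiodic (snocPat Q R) :=
      isAperiodic_of_col_eq_spike hlohi.ne (Fin.last j) fun i => Fin.snoc_last _ _
    obtain ⟨r, hedge⟩ := exists_ringEdge_snocPat hQ hQR fun s R' hs hR' => by
      rcases hQa with hQa | rfl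
      · obtain rfl := hQa s hs
        exact le_of_eq (funext fun i => by simpa using (hR' i).symm)
      · have hR'_eq : R' = spike lo hi (Fin.last n + s) := funext fun x => by
          rw [← sub_add_cancel x s, hR', spike_add, add_sub_cancel_right]
        rw [hR'_eq]
        exact toLex_spike_le hlohi.le (Fin.le_last _)
    have hcol' : ∀ t : Fin j, c ≤ t → ∀ i,
        vrot r (tailPat (snocPat Q R)) i t = spike lo hi (a - r) i := fun t ht i => by
      rw [← spike_add]
      exact tailPat_snocPat_col hcol t ht (i + r)
    refine .head ⟨R, hedge⟩ (ih (by omega) _ _ hedge.2.1 (Or.inl ?_) hcol')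
    exact isAperiodic_of_col_eq_spike hlohi.ne ⟨c, by omega⟩ (hcol' _ le_rfl)

end RingGraph

/-- Every `(m, j+1)_k`-ring graph is weakly connected: from every vertex there is a directed
path to the vertex all of whose columns equal `(0,…,0,1)ᵀ`. -/
theorem ringGraph_connected (m j k : ℕ) (hm : 2 ≤ m) (hk : 2 ≤ k)
    (P : Fin m → Fin j → Fin k) (hP : IsLexmin P) :
    Relation.ReflTransGen (fun P₁ P₂ : Fin m → Fin j → Fin k => ∃ R, RingEdge P₁ P₂ R) P
      (fun i _ => if (i : ℕ) = m - 1 then (⟨1, by omega⟩ : Fin k) else ⟨0, by omega⟩) := by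
  obtain ⟨n, rfl⟩ : ∃ n, m = n + 1 := ⟨m - 1, by omega⟩
  have hT : (fun (i : Fin (n + 1)) (_ : Fin j) =>
      if (i : ℕ) = n + 1 - 1 then (⟨1, by omega⟩ : Fin k) else ⟨0, by omega⟩) =
      spike (fun _ => ⟨0, by omega⟩) (fun _ => ⟨1, by omega⟩) (Fin.last n) := by
    funext i t
    by_cases hi : (i : ℕ) = n <;> simp [spike, Fin.ext_iff, hi]
  rw [hT]
  exact reflTransGen_ringAdj_spike_last (Fin.mk_lt_mk.mpr zero_lt_one) j le_rfl P _ hP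
    (Or.inr rfl) fun t ht => absurd t.isLt (by omega)
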